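/- arXiv:1207.0713 — 7 statements merged into one kernel-verified Lean document; each statement's English description precedes it below -/
import Mathlib

section
/- Let A be a set with at least two elements and let f : A³ → A be the operation defined by f(a,a,b) = f(a,b,a) = f(b,a,a) = a for all a,b ∈ A, and f(a,b,c) = a whenever a,b,c are pairwise distinct. Then every ternary term operation t of the algebra (A, f) satisfies exactly one of the following: t(x,y,z) = x for all x,y,z; t(x,y,z) = y for all x,y,z; t(x,y,z) = z for all x,y,z; or t is a majority operation, i.e., t(x,x,y) = t(x,y,x) = t(y,x,x) = x for all x,y ∈ A. -/
/-- The ternary term operations of an algebra with a single ternary basic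
operation `f`: the smallest set of functions `A → A → A → A` containing the
three projections and closed under pointwise composition with `f`. -/
inductive IsTernaryTermOp {A : Type*} (f : A → A → A → A) : (A → A → A → A) → Prop
  | proj1 : IsTernaryTermOp f (fun x _ _ => x)
  | proj2 : IsTernaryTermOp f (fun _ y _ => y)
  | proj3 : IsTernaryTermOp f (fun _ _ z => z)
  | comp (t₁ t₂ t₃ : A → A → A → A) :
      IsTernaryTermOp f t₁ → IsTernaryTermOp f t₂ → IsTernaryTermOp f t₃ →
      IsTernaryTermOp f (fun x y z => f (t₁ x y z) (t₂ x y z) (t₃ x y z))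

/-- `t` is the first ternary projection. -/
def IsProj1 {A : Type*} (t : A → A → A → A) : Prop := ∀ x y z : A, t x y z = x

/-- `t` is the second ternary projection. -/
def IsProj2 {A : Type*} (t : A → A → A → A) : Prop := ∀ x y z : A, t x y z = y

/-- `t` is the third ternary projection. -/
def IsProj3 {A : Type*} (t : A → A → A → A) : Prop := ∀ x y z : A, t x y z = z

/-- `t` is a majority operation. -/
def IsMajority {A : Type*} (t : A → A → A → A) : Prop :=
  ∀ x y : A, t x x y = x ∧ t x y x = x ∧ t y x x = x

/-!
A majority operation `f` absorbs repetition: `f(s, s, u) = f(s, u, s) = f(u, s, s) = s`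
pointwise. Hence the functions that are projections or majority operations are closed
under composition with `f`: if two arguments are the same projection the composite is that
projection, and otherwise, on each of the inputs `(x, x, y)`, `(x, y, x)`, `(y, x, x)`, at
least two arguments return the majority value `x`. The four cases are told apart by the
values at `(b, a, a)`, `(a, b, a)`, `(a, a, b)` for `a ≠ b`.
-/

section Classification

variable {A : Type*} {t : A → A → A → A}

def IsProjOrMajority (t : A → A → A → A) : Prop :=
  IsProj1 t ∨ IsProj2 t ∨ IsProj3 t ∨ IsMajority t

theorem IsTernaryTermOp.isProjOrMajority {f : A → A → A → A}
    (hmaj1 : ∀ a b : A, f a a b = a) (hmaj2 : ∀ a b : A, f a b a = a)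
    (hmaj3 : ∀ a b : A, f b a a = a) (ht : IsTernaryTermOp f t) : IsProjOrMajority t := by
  induction ht with
  | proj1 => exact Or.inl fun _ _ _ => rfl
  | proj2 => exact Or.inr <| Or.inl fun _ _ _ => rfl
  | proj3 => exact Or.inr <| Or.inr <| Or.inl fun _ _ _ => rfl
  | comp t₁ t₂ t₃ _ _ _ ih₁ ih₂ ih₃ =>
    unfold IsProjOrMajority IsProj1 IsProj2 IsProj3 IsMajority at *
    rcases ih₁ with h₁ | h₁ | h₁ | h₁ <;> rcases ih₂ with h₂ | h₂ | h₂ | h₂ <;>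
      rcases ih₃ with h₃ | h₃ | h₃ | h₃ <;> simp [h₁, h₂, h₃, hmaj1, hmaj2, hmaj3]

def nearDiagonalValues (t : A → A → A → A) (a b : A) : A × A × A :=
  (t b a a, t a b a, t a a b)

theorem IsProj1.nearDiagonalValues_eq (h : IsProj1 t) (a b : A) :
    nearDiagonalValues t a b = (b, a, a) := by
  rw [nearDiagonalValues, h b a a, h a b a, h a a b]

theorem IsProj2.nearDiagonalValues_eq (h : IsProj2 t) (a b : A) :
    nearDiagonalValues t a b = (a, b, a) := by
  rw [nearDiagonalValues, h b a a, h a b a, h a a b]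

theorem IsProj3.nearDiagonalValues_eq (h : IsProj3 t) (a b : A) :
    nearDiagonalValues t a b = (a, a, b) := by
  rw [nearDiagonalValues, h b a a, h a b a, h a a b]

theorem IsMajority.nearDiagonalValues_eq (h : IsMajority t) (a b : A) :
    nearDiagonalValues t a b = (a, a, a) := by
  rw [nearDiagonalValues, (h a b).2.2, (h a b).2.1, (h a b).1]

end Classification

theorem stmt_1_general {A : Type*} (hA : ∃ a b : A, a ≠ b)
    (f : A → A → A → A)
    (hmaj1 : ∀ a b : A, f a a b = a)
    (hmaj2 : ∀ a b : A, f a b a = a)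
    (hmaj3 : ∀ a b : A, f b a a = a) :
    ∀ t : A → A → A → A, IsTernaryTermOp f t →
      (IsProj1 t ∧ ¬ IsProj2 t ∧ ¬ IsProj3 t ∧ ¬ IsMajority t) ∨
      (¬ IsProj1 t ∧ IsProj2 t ∧ ¬ IsProj3 t ∧ ¬ IsMajority t) ∨
      (¬ IsProj1 t ∧ ¬ IsProj2 t ∧ IsProj3 t ∧ ¬ IsMajority t) ∨
      (¬ IsProj1 t ∧ ¬ IsProj2 t ∧ ¬ IsProj3 t ∧ IsMajority t) := by
  obtain ⟨a, b, hab⟩ := hA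
  intro t ht
  have h₁ := fun h : IsProj1 t => h.nearDiagonalValues_eq a b
  have h₂ := fun h : IsProj2 t => h.nearDiagonalValues_eq a b
  have h₃ := fun h : IsProj3 t => h.nearDiagonalValues_eq a b
  have hm := fun h : IsMajority t => h.nearDiagonalValues_eq a b
  rcases ht.isProjOrMajority hmaj1 hmaj2 hmaj3 with h | h | h | h <;>
    grind

theorem stmt_1 {A : Type*} (hA : ∃ a b : A, a ≠ b)
    (f : A → A → A → A)
    (hmaj1 : ∀ a b : A, f a a b = a)
    (hmaj2 : ∀ a b : A, f a b a = a)
    (hmaj3 : ∀ a b : A, f b a a = a)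
    (hdist : ∀ a b c : A, a ≠ b → b ≠ c → a ≠ c → f a b c = a) :
    ∀ t : A → A → A → A, IsTernaryTermOp f t →
      (IsProj1 t ∧ ¬ IsProj2 t ∧ ¬ IsProj3 t ∧ ¬ IsMajority t) ∨
      (¬ IsProj1 t ∧ IsProj2 t ∧ ¬ IsProj3 t ∧ ¬ IsMajority t) ∨
      (¬ IsProj1 t ∧ ¬ IsProj2 t ∧ IsProj3 t ∧ ¬ IsMajority t) ∨
      (¬ IsProj1 t ∧ ¬ IsProj2 t ∧ ¬ IsProj3 t ∧ IsMajority t) :=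
  stmt_1_general hA f hmaj1 hmaj2 hmaj3
end

section
/- Let R be a ring and M a (left) R-module. Suppose α, β, γ, a, b, c ∈ R are such that the operations p(x,y,z) = α•x + β•y + γ•z and q(x,y,z) = a•x + b•y + c•z on M are idempotent (p(x,x,x) = x and q(x,x,x) = x for all x ∈ M) and satisfy, for all x,y ∈ M, the identities p(x,x,y) = p(x,y,y) = p(x,y,x) = q(x,x,y) = q(x,y,x) = q(y,x,x). Then M is trivial, i.e., every element of M equals 0. -/
/-!
Since the operations are linear, putting `0` for one variable in each identity isolates the
coefficients: `β` and `γ` act as `0`, `α` as the identity, and `a`, `b`, `c` all act alike.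
Hence `x = p(x, 0, x) = q(x, x, 0) = 2 • (a • x)`, while idempotence of `q` gives
`x = 3 • (a • x)`, so `a • x = 0` and `x = 0`.
-/

theorem eq_zero_of_two_nsmul_eq_of_three_nsmul_eq {G : Type*} [AddGroup G] {x u : G}
    (h₂ : 2 • u = x) (h₃ : 3 • u = x) : x = 0 := by
  have hu : u = 0 := by
    rw [succ_nsmul, h₂] at h₃
    exact add_eq_left.mp h₃
  rw [← h₂, hu, nsmul_zero]

theorem stmt_3 {R : Type*} [Ring R] {M : Type*} [AddCommGroup M] [Module R M]
    (α β γ a b c : R)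
    (hp_idem : ∀ x : M, α • x + β • x + γ • x = x)
    (hq_idem : ∀ x : M, a • x + b • x + c • x = x)
    (h1 : ∀ x y : M, α • x + β • x + γ • y = α • x + β • y + γ • y)
    (h2 : ∀ x y : M, α • x + β • y + γ • y = α • x + β • y + γ • x)
    (h3 : ∀ x y : M, α • x + β • y + γ • x = a • x + b • x + c • y)
    (h4 : ∀ x y : M, a • x + b • x + c • y = a • x + b • y + c • x)
    (h5 : ∀ x y : M, a • x + b • y + c • x = a • y + b • x + c • x) :
    ∀ x : M, x = 0 := by
  intro x
  have hβ : β • x = 0 := by simpa using h1 x 0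
  have hγ : γ • x = 0 := by simpa using (h2 x 0).symm
  have hα : α • x = x := by simpa [hβ, hγ] using hp_idem x
  have hba : b • x = a • x := by simpa using h5 0 x
  have hca : c • x = a • x := by simpa [hba] using h4 0 x
  have h_two : 2 • (a • x) = x := by simpa [two_nsmul, hα, hγ, hba] using (h3 x 0).symm
  have h_three : 3 • (a • x) = x := by
    simpa [succ_nsmul, two_nsmul, hba, hca] using hq_idem x
  exact eq_zero_of_two_nsmul_eq_of_three_nsmul_eq h_two h_three
end

section
/- Let R be a ring and M a (left) R-module. Suppose α, β, γ, a, b, c ∈ R are such that the operations p(x,y,z) = α•x + β•y + γ•z and q(x,y,z) = a•x + b•y + c•z on M are idempotent (p(x,x,x) = x and q(x,x,x) = x for all x ∈ M) and satisfy, for all x,y ∈ M, the identities of system (S2): p(x,x,y) = p(x,y,y) and p(x,y,x) = q(x,x,y) = q(x,y,x) = q(y,x,x). Then M is trivial, i.e., every element of M equals 0. -/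
/-!
Substituting `x = 0` in the identities of (S2), one after the other, shows that `β`, `c`, `b`
and `a` annihilate `M` (each identity equates the action of the next coefficient with that of
one already known to vanish). Hence `a + b + c` lies in the annihilator, while idempotence of `q`
says it acts as the identity.
-/

theorem Module.eq_zero_of_mem_annihilator_of_smul_eq_self {R M : Type*} [Ring R] [AddCommGroup M]
    [Module R M] {r : R} (hr : r ∈ Module.annihilator R M) {x : M} (hx : r • x = x) : x = 0 :=
  hx ▸ Module.mem_annihilator.mp hr x

theorem stmt_4_general {R : Type*} [Ring R] {M : Type*} [AddCommGroup M] [Module R M]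
    (α β γ a b c : R)
    (hq_idem : ∀ x : M, a • x + b • x + c • x = x)
    (h1 : ∀ x y : M, α • x + β • x + γ • y = α • x + β • y + γ • y)
    (h2 : ∀ x y : M, α • x + β • y + γ • x = a • x + b • x + c • y)
    (h3 : ∀ x y : M, a • x + b • x + c • y = a • x + b • y + c • x)
    (h4 : ∀ x y : M, a • x + b • y + c • x = a • y + b • x + c • x) :
    ∀ x : M, x = 0 := by
  open Module in
  have hβ : β ∈ annihilator R M := mem_annihilator.mpr fun y => by simpa using h1 0 y
  have hc : c ∈ annihilator R M := mem_annihilator.mpr fun y => by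
    simpa [mem_annihilator.mp hβ] using (h2 0 y).symm
  have hb : b ∈ annihilator R M := mem_annihilator.mpr fun y => by
    simpa [mem_annihilator.mp hc] using (h3 0 y).symm
  have ha : a ∈ annihilator R M := mem_annihilator.mpr fun y => by
    simpa [mem_annihilator.mp hb] using (h4 0 y).symm
  intro x
  exact eq_zero_of_mem_annihilator_of_smul_eq_self (add_mem (add_mem ha hb) hc)
    (by simpa only [add_smul] using hq_idem x)

theorem stmt_4 {R : Type*} [Ring R] {M : Type*} [AddCommGroup M] [Module R M]
    (α β γ a b c : R)
    (hp_idem : ∀ x : M, α • x + β • x + γ • x = x)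
    (hq_idem : ∀ x : M, a • x + b • x + c • x = x)
    (h1 : ∀ x y : M, α • x + β • x + γ • y = α • x + β • y + γ • y)
    (h2 : ∀ x y : M, α • x + β • y + γ • x = a • x + b • x + c • y)
    (h3 : ∀ x y : M, a • x + b • x + c • y = a • x + b • y + c • x)
    (h4 : ∀ x y : M, a • x + b • y + c • x = a • y + b • x + c • x) :
    ∀ x : M, x = 0 :=
  stmt_4_general α β γ a b c hq_idem h1 h2 h3 h4
end

section
/- Let R be a ring and M a (left) R-module. Suppose α, β, γ, a, b, c ∈ R are such that the operations p(x,y,z) = α•x + β•y + γ•z and q(x,y,z) = a•x + b•y + c•z on M are idempotent (p(x,x,x) = x and q(x,x,x) = x for all x ∈ M) and satisfy, for all x,y ∈ M, the identities of system (S3): p(x,x,y) = x and p(x,y,x) = p(y,x,x) = q(y,x,x) = q(x,y,x) = q(x,x,y). Then M is trivial, i.e., every element of M equals 0. -/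
theorem stmt_5_general {R : Type*} [Ring R] {M : Type*} [AddCommGroup M] [Module R M]
    (α β γ a b c : R)
    (h1 : ∀ x y : M, α • x + β • x + γ • y = x)
    (h2 : ∀ x y : M, α • x + β • y + γ • x = α • y + β • x + γ • x)
    (h3 : ∀ x y : M, α • y + β • x + γ • x = a • y + b • x + c • x)
    (h4 : ∀ x y : M, a • y + b • x + c • x = a • x + b • y + c • x)
    (h5 : ∀ x y : M, a • x + b • y + c • x = a • x + b • x + c • y) :
    ∀ x : M, x = 0 := by
  intro y
  have hγ : γ • y = 0 := by simpa using h1 0 y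
  have hβα : β • y = α • y := by simpa using h2 0 y
  have hαa : α • y = a • y := by simpa using h3 0 y
  have hab : a • y = b • y := by simpa using h4 0 y
  have hbc : b • y = c • y := by simpa using h5 0 y
  have hβ : β • y + γ • y = b • y + c • y := by simpa using h3 y 0
  have ha : a • y = 0 := by
    rwa [hγ, hβα, hαa, ← hbc, ← hab, add_zero, left_eq_add] at hβ
  calc y = α • y + β • y + γ • y := (h1 y y).symm
    _ = 0 := by rw [hβα, hαa, ha, hγ, add_zero, add_zero]

theorem stmt_5 {R : Type*} [Ring R] {M : Type*} [AddCommGroup M] [Module R M]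
    (α β γ a b c : R)
    (hp_idem : ∀ x : M, α • x + β • x + γ • x = x)
    (hq_idem : ∀ x : M, a • x + b • x + c • x = x)
    (h1 : ∀ x y : M, α • x + β • x + γ • y = x)
    (h2 : ∀ x y : M, α • x + β • y + γ • x = α • y + β • x + γ • x)
    (h3 : ∀ x y : M, α • y + β • x + γ • x = a • y + b • x + c • x)
    (h4 : ∀ x y : M, a • y + b • x + c • x = a • x + b • y + c • x)
    (h5 : ∀ x y : M, a • x + b • y + c • x = a • x + b • x + c • y) :
    ∀ x : M, x = 0 :=
  stmt_5_general α β γ a b c h1 h2 h3 h4 h5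
end

section
/- Let R be a ring and M a (left) R-module. Suppose α, β, γ, a, b, c ∈ R are such that the operations p(x,y,z) = α•x + β•y + γ•z and q(x,y,z) = a•x + b•y + c•z on M are idempotent (p(x,x,x) = x and q(x,x,x) = x for all x ∈ M) and satisfy, for all x,y ∈ M, the identities of system (S5): q(x,y,x) = x, p(x,y,y) = p(x,y,x), and p(x,x,y) = q(x,x,y) = q(y,x,x). Then M is trivial, i.e., every element of M equals 0. -/
/-! Putting `x := 0` in the identities of (S5) isolates single coefficients: `b` and `γ` act
as zero, while `c` acts as `a` and as `γ`. Hence `a`, `b`, `c` all act as zero, and idempotency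
of `q` gives `x = q(x,x,x) = 0`. -/

theorem stmt_6_general {R : Type*} [Ring R] {M : Type*} [AddCommGroup M] [Module R M]
    (α β γ a b c : R)
    (hq_idem : ∀ x : M, a • x + b • x + c • x = x)
    (h1 : ∀ x y : M, a • x + b • y + c • x = x)
    (h2 : ∀ x y : M, α • x + β • y + γ • y = α • x + β • y + γ • x)
    (h3 : ∀ x y : M, α • x + β • x + γ • y = a • x + b • x + c • y)
    (h4 : ∀ x y : M, a • x + b • x + c • y = a • y + b • x + c • x) :
    ∀ x : M, x = 0 := by
  have hb (y : M) : b • y = 0 := by simpa using h1 0 y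
  have hγ (y : M) : γ • y = 0 := by simpa using h2 0 y
  have hc (y : M) : c • y = 0 := by simpa [hγ] using (h3 0 y).symm
  have ha (y : M) : a • y = 0 := by simpa [hc] using (h4 0 y).symm
  intro x
  simpa [ha, hb, hc] using (hq_idem x).symm

theorem stmt_6 {R : Type*} [Ring R] {M : Type*} [AddCommGroup M] [Module R M]
    (α β γ a b c : R)
    (hp_idem : ∀ x : M, α • x + β • x + γ • x = x)
    (hq_idem : ∀ x : M, a • x + b • x + c • x = x)
    (h1 : ∀ x y : M, a • x + b • y + c • x = x)
    (h2 : ∀ x y : M, α • x + β • y + γ • y = α • x + β • y + γ • x)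
    (h3 : ∀ x y : M, α • x + β • x + γ • y = a • x + b • x + c • y)
    (h4 : ∀ x y : M, a • x + b • x + c • y = a • y + b • x + c • x) :
    ∀ x : M, x = 0 :=
  stmt_6_general α β γ a b c hq_idem h1 h2 h3 h4
end

section
/- Let F be the ternary operation on {0,1} × {0,1} given by F((a,b),(c,d),(e,h)) = (maj(a,c,e), b ∧ d ∧ h), where maj is the majority operation on {0,1}. Define v(x,y,z) = F(x,y,z) and w(x,y,z,u) = F(x, y, F(x,z,u)). Then v is an idempotent ternary weak near-unanimity operation (v(x,x,y) = v(x,y,x) = v(y,x,x) for all x,y), w is an idempotent 4-ary weak near-unanimity operation (w(y,x,x,x) = w(x,y,x,x) = w(x,x,y,x) = w(x,x,x,y) for all x,y), and v(y,x,x) = w(y,x,x,x) for all x,y. -/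
/-!
On a tuple with one entry `y` and all others `x`, the operation `F` returns `(x.1, x.2 ∧ y.2)`:
majority ignores the lone `y` in the first coordinate, while the meet records it in the second.
The same holds for `w`, because its inner `F` produces this value again and the outer `F` keeps
it. So `v` and `w` are weak near-unanimity operations with the same binary part, and
idempotency is the case `y = x`.
-/

/-- The majority operation on the two-element set `{0,1}` (modelled on `Bool`). -/
def bmaj (a b c : Bool) : Bool := (a && b) || (a && c) || (b && c)

/-- The ternary operation `F` on `{0,1} × {0,1}` acting as the majority
operation in the first coordinate and as the triple Boolean meet in the
second coordinate. -/
def F (x y z : Bool × Bool) : Bool × Bool := (bmaj x.1 y.1 z.1, x.2 && y.2 && z.2)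

theorem bmaj_self_left (a b : Bool) : bmaj a a b = a := by
  cases a <;> cases b <;> rfl

theorem bmaj_self_outer (a b : Bool) : bmaj a b a = a := by
  cases a <;> cases b <;> rfl

theorem bmaj_self_right (a b : Bool) : bmaj b a a = a := by
  cases a <;> cases b <;> rfl

def nuValue (x y : Bool × Bool) : Bool × Bool := (x.1, x.2 && y.2)

theorem nuValue_self (x : Bool × Bool) : nuValue x x = x := by
  simp only [nuValue, Bool.and_self]

theorem nuValue_nuValue (x y : Bool × Bool) : nuValue x (nuValue x y) = nuValue x y := by
  simp [nuValue]

theorem F_self_left (x y : Bool × Bool) : F x x y = nuValue x y := by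
  simp only [F, nuValue, bmaj_self_left, Bool.and_self]

theorem F_self_outer (x y : Bool × Bool) : F x y x = nuValue x y := by
  simp only [F, nuValue, bmaj_self_outer, Prod.mk.injEq, true_and]
  cases x.2 <;> cases y.2 <;> rfl

theorem F_self_right (x y : Bool × Bool) : F y x x = nuValue x y := by
  simp only [F, nuValue, bmaj_self_right, Prod.mk.injEq, true_and]
  cases x.2 <;> cases y.2 <;> rfl

theorem F_self_right_nuValue (x y : Bool × Bool) : F y x (nuValue x y) = nuValue x y := by
  simp only [F, nuValue, bmaj_self_right, Prod.mk.injEq, true_and]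
  cases x.2 <;> cases y.2 <;> rfl

theorem stmt_11
    (v : Bool × Bool → Bool × Bool → Bool × Bool → Bool × Bool)
    (hv : ∀ x y z, v x y z = F x y z)
    (w : Bool × Bool → Bool × Bool → Bool × Bool → Bool × Bool → Bool × Bool)
    (hw : ∀ x y z u, w x y z u = F x y (F x z u)) :
    (∀ x, v x x x = x) ∧
    (∀ x y, v x x y = v x y x ∧ v x y x = v y x x) ∧
    (∀ x, w x x x x = x) ∧
    (∀ x y, w y x x x = w x y x x ∧ w x y x x = w x x y x ∧ w x x y x = w x x x y) ∧
    (∀ x y, v y x x = w y x x x) := by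
  have v_near_unanimous (x y : Bool × Bool) :
      v x x y = nuValue x y ∧ v x y x = nuValue x y ∧ v y x x = nuValue x y := by
    simp only [hv, F_self_left, F_self_outer, F_self_right, and_self]
  have w_near_unanimous (x y : Bool × Bool) :
      w y x x x = nuValue x y ∧ w x y x x = nuValue x y ∧ w x x y x = nuValue x y ∧
        w x x x y = nuValue x y := by
    simp only [hw, F_self_left, F_self_outer, F_self_right, F_self_right_nuValue, nuValue_self,
      nuValue_nuValue, and_self]
  refine ⟨fun x => ?_, fun x y => ?_, fun x => ?_, fun x y => ?_, fun x y => ?_⟩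
  · rw [(v_near_unanimous x x).1, nuValue_self]
  · obtain ⟨h₁, h₂, h₃⟩ := v_near_unanimous x y
    exact ⟨h₁.trans h₂.symm, h₂.trans h₃.symm⟩
  · rw [(w_near_unanimous x x).1, nuValue_self]
  · obtain ⟨h₁, h₂, h₃, h₄⟩ := w_near_unanimous x y
    exact ⟨h₁.trans h₂.symm, h₂.trans h₃.symm, h₃.trans h₄.symm⟩
  · rw [(v_near_unanimous x y).2.2, (w_near_unanimous x y).1]
end

section
/- Let F be the ternary operation on {0,1} × {0,1} given by F((a,b),(c,d),(e,h)) = (maj(a,c,e), b ∧ d ∧ h), where maj is the majority operation on {0,1}. Then no ternary term operation q of the algebra ({0,1} × {0,1}, F) — i.e., no member of the smallest set of functions ({0,1}×{0,1})³ → {0,1}×{0,1} containing the three ternary projections and closed under pointwise composition with F — satisfies both q(x,y,x) = x for all x,y and q(x,x,y) = q(y,x,x) for all x,y. Consequently this algebra does not realize system (S5). -/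
/-- The ternary term operations of the algebra `({0,1} × {0,1}, F)`: the
smallest set of functions containing the three ternary projections and closed
under pointwise composition with `F`. -/
inductive IsFTermOp : (Bool × Bool → Bool × Bool → Bool × Bool → Bool × Bool) → Prop
  | proj1 : IsFTermOp (fun x _ _ => x)
  | proj2 : IsFTermOp (fun _ y _ => y)
  | proj3 : IsFTermOp (fun _ _ z => z)
  | comp (t₁ t₂ t₃ : Bool × Bool → Bool × Bool → Bool × Bool → Bool × Bool) :
      IsFTermOp t₁ → IsFTermOp t₂ → IsFTermOp t₃ →
      IsFTermOp (fun x y z => F (t₁ x y z) (t₂ x y z) (t₃ x y z))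

/-!
Term operations preserve every binary relation that `F` preserves. Two such relations suffice:
equality of second coordinates, and, for `c : Bool`, the relation "if `u.2` then `v.1 = c ^^ u.1`"
(compatible because majority commutes with negation). For `c = false` it lets the first coordinate
of `q` ignore an argument with second coordinate `false` whenever the value has second coordinate
`true`; for `c = true` it is self-duality. With `1 = (true, true)`,
`0 = (false, true)` and `0' = (false, false)`, the identities then give
`q(0,0,1).1 = q(1,0,0).1 = q(1,1,0).1 = !q(0,0,1).1`.
-/

open Relator

theorem IsFTermOp.liftFun {R : Bool × Bool → Bool × Bool → Prop} (hF : (R ⇒ R ⇒ R ⇒ R) F F)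
    {q : Bool × Bool → Bool × Bool → Bool × Bool → Bool × Bool} (hq : IsFTermOp q) :
    (R ⇒ R ⇒ R ⇒ R) q q := by
  induction hq with
  | proj1 => exact fun _ _ hx _ _ _ _ _ _ => hx
  | proj2 => exact fun _ _ _ _ _ hy _ _ _ => hy
  | proj3 => exact fun _ _ _ _ _ _ _ _ hz => hz
  | comp _ _ _ _ _ _ ihfst_110 ihdual ihmid =>
    exact fun _ _ hx _ _ hy _ _ hz => hF (ihfst_110 hx hy hz) (ihdual hx hy hz) (ihmid hx hy hz)

theorem bmaj_xor (c a b d : Bool) : bmaj (c ^^ a) (c ^^ b) (c ^^ d) = (c ^^ bmaj a b d) := by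
  revert c a b d; decide

theorem F_liftFun_snd :
    ((fun u v : Bool × Bool => u.2 = v.2) ⇒ (fun u v => u.2 = v.2) ⇒ (fun u v => u.2 = v.2) ⇒
      (fun u v => u.2 = v.2)) F F := by
  intro _ _ hx _ _ hy _ _ hz
  simp only [F, hx, hy, hz]

def SndImpFstXor (c : Bool) (u v : Bool × Bool) : Prop := u.2 = true → v.1 = (c ^^ u.1)

theorem F_liftFun_sndImpFstXor (c : Bool) :
    (SndImpFstXor c ⇒ SndImpFstXor c ⇒ SndImpFstXor c ⇒ SndImpFstXor c) F F := by
  intro _ _ hx _ _ hy _ _ hz h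
  simp only [F, Bool.and_eq_true] at h
  simp only [F, hx h.1.1, hy h.1.2, hz h.2, bmaj_xor]

theorem IsFTermOp.snd_congr {q : Bool × Bool → Bool × Bool → Bool × Bool → Bool × Bool}
    (hq : IsFTermOp q) {x y z x' y' z' : Bool × Bool} (hx : x.2 = x'.2) (hy : y.2 = y'.2)
    (hz : z.2 = z'.2) : (q x y z).2 = (q x' y' z').2 :=
  hq.liftFun F_liftFun_snd hx hy hz

theorem IsFTermOp.sndImpFstXor {q : Bool × Bool → Bool × Bool → Bool × Bool → Bool × Bool}
    (hq : IsFTermOp q) (c : Bool) {x y z x' y' z' : Bool × Bool} (hx : SndImpFstXor c x x')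
    (hy : SndImpFstXor c y y') (hz : SndImpFstXor c z z') :
    SndImpFstXor c (q x y z) (q x' y' z') :=
  hq.liftFun (F_liftFun_sndImpFstXor c) hx hy hz

theorem stmt_13 :
    ¬ ∃ q : Bool × Bool → Bool × Bool → Bool × Bool → Bool × Bool,
      IsFTermOp q ∧ (∀ x y, q x y x = x) ∧ (∀ x y, q x x y = q y x x) := by
  rintro ⟨q, hq, hxyx, hsym⟩
  have hsnd_mid_false : (q (true, true) (false, false) (false, true)).2 = true := by
    simpa [hxyx] using hq.snd_congr (x := (true, true)) (y := (false, false)) (z := (false, true))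
      (x' := (true, true)) (y' := (false, false)) (z' := (true, true)) rfl rfl rfl
  have hsnd_all_true : (q (true, true) (true, true) (false, true)).2 = true := by
    simpa [hxyx] using hq.snd_congr (x := (true, true)) (y := (true, true)) (z := (false, true))
      (x' := (true, true)) (y' := (true, true)) (z' := (true, true)) rfl rfl rfl
  have hfst_100 : (q (true, true) (false, true) (false, true)).1 =
      (false ^^ (q (true, true) (false, false) (false, true)).1) :=
    hq.sndImpFstXor false (fun _ => rfl) (fun h => nomatch h) (fun _ => rfl) hsnd_mid_false
  have hfst_110 : (q (true, true) (true, true) (false, true)).1 =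
      (false ^^ (q (true, true) (false, false) (false, true)).1) :=
    hq.sndImpFstXor false (fun _ => rfl) (fun h => nomatch h) (fun _ => rfl) hsnd_mid_false
  have hdual : (q (false, true) (false, true) (true, true)).1 =
      (true ^^ (q (true, true) (true, true) (false, true)).1) :=
    hq.sndImpFstXor true (fun _ => rfl) (fun _ => rfl) (fun _ => rfl) hsnd_all_true
  have hmid : (q (true, true) (false, true) (false, true)).1 =
      (q (true, true) (true, true) (false, true)).1 :=
    hfst_100.trans hfst_110.symm
  rw [hsym, hmid, Bool.true_xor] at hdual
  exact Bool.self_ne_not _ hdual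
end
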